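/- The hyperplane M of JH_∞ (functions vanishing at the root) has an octahedral norm, and being separable, M has the almost Daugavet property. -/

import Mathlib

/-!
Adding `l` at the node `freshNode N = N :: 0^N` to a vector supported on nodes of level and
entries below `N` adds exactly `|l|` to its `JH_∞` norm: every segment of an admissible family is
prolonged above its top node by nodes containing the entry `N`, and a new segment through
`freshNode N` joins the family. Hence `M` carries a dense sequence `u` and unit vectors `y m`
with `‖v + l • y m‖ = ‖v‖ + |l|` on a subspace containing `u i` (`i ≤ m`) and `y i` (`i < m`).
Covering the unit sphere of a finite-dimensional subspace by finitely many balls around the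
`u i` gives octahedrality. For the almost Daugavet property, `Y` is spanned by weak-* limits
`g j` of norming functionals with `g j (u j) = ‖u j‖` and `g j (y m) = ± 1` following every
finite sign pattern for arbitrarily large `m`; each element of `Y` then attains its norm at
such `y m`, far out in the `ℓ¹`-summands.
-/

open Metric

/-- A segment in the tree `T` of finite sequences of naturals: a finite subset totally
ordered under the prefix (extension) order. -/
def SegL (S : Finset (List ℕ)) : Prop :=
  ∀ s ∈ S, ∀ t ∈ S, s <+: t ∨ t <+: s

/-- An `n–m` segment: a nonempty segment whose least element has level (length) `n` and
whose greatest element has level `m`. -/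
def IsNMSeg (S : Finset (List ℕ)) (n m : ℕ) : Prop :=
  SegL S ∧ (∀ t ∈ S, n ≤ t.length ∧ t.length ≤ m) ∧
    (∃ t ∈ S, t.length = n) ∧ (∃ t ∈ S, t.length = m)

/-- An admissible family of segments: pairwise disjoint `n–m` segments for a common pair
`n ≤ m`. -/
def AdmissibleL (F : Finset (Finset (List ℕ))) : Prop :=
  ∃ n m : ℕ, n ≤ m ∧ (∀ S ∈ F, IsNMSeg S n m) ∧
    ∀ S ∈ F, ∀ S' ∈ F, S ≠ S' → Disjoint S S'

/-- The `JH_∞` norm of a finitely supported function on `T`. -/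
noncomputable def jhInfNorm (x : (List ℕ) →₀ ℝ) : ℝ :=
  sSup {r : ℝ | ∃ F : Finset (Finset (List ℕ)), AdmissibleL F ∧
    r = ∑ S ∈ F, |∑ t ∈ S, x t|}

def jhValues (x : List ℕ →₀ ℝ) : Set ℝ :=
  {r : ℝ | ∃ F : Finset (Finset (List ℕ)), AdmissibleL F ∧ r = ∑ S ∈ F, |∑ t ∈ S, x t|}

def AdmissibleAt (F : Finset (Finset (List ℕ))) (n m : ℕ) : Prop :=
  n ≤ m ∧ (∀ S ∈ F, IsNMSeg S n m) ∧ ∀ S ∈ F, ∀ S' ∈ F, S ≠ S' → Disjoint S S'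

lemma sum_abs_sum_le_sum_abs (x : List ℕ →₀ ℝ) {F : Finset (Finset (List ℕ))}
    (hF : ∀ S ∈ F, ∀ S' ∈ F, S ≠ S' → Disjoint S S') :
    ∑ S ∈ F, |∑ t ∈ S, x t| ≤ ∑ t ∈ x.support, |x t| := by
  calc ∑ S ∈ F, |∑ t ∈ S, x t| ≤ ∑ S ∈ F, ∑ t ∈ S, |x t| :=
        Finset.sum_le_sum fun S _ => Finset.abs_sum_le_sum_abs _ _
    _ = ∑ t ∈ F.biUnion id, |x t| := (Finset.sum_biUnion hF).symm
    _ = ∑ t ∈ (F.biUnion id).filter (x · ≠ 0), |x t| := by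
        rw [Finset.sum_filter_of_ne]; intro t _ h; simpa using h
    _ ≤ ∑ t ∈ x.support, |x t| :=
        Finset.sum_le_sum_of_subset_of_nonneg (fun t ht => by simp_all)
          fun _ _ _ => abs_nonneg _

lemma bddAbove_jhValues (x : List ℕ →₀ ℝ) : BddAbove (jhValues x) := by
  refine ⟨∑ t ∈ x.support, |x t|, ?_⟩
  rintro r ⟨F, ⟨n, m, -, -, hdis⟩, rfl⟩
  exact sum_abs_sum_le_sum_abs x hdis

lemma zero_mem_jhValues (x : List ℕ →₀ ℝ) : (0 : ℝ) ∈ jhValues x :=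
  ⟨∅, ⟨0, 0, le_rfl, by simp, by simp⟩, by simp⟩

lemma le_jhInfNorm {x : List ℕ →₀ ℝ} {r : ℝ} (hr : r ∈ jhValues x) : r ≤ jhInfNorm x :=
  le_csSup (bddAbove_jhValues x) hr

lemma jhInfNorm_le {x : List ℕ →₀ ℝ} {A : ℝ} (h : ∀ r ∈ jhValues x, r ≤ A) :
    jhInfNorm x ≤ A :=
  csSup_le ⟨0, zero_mem_jhValues x⟩ h

lemma abs_mem_jhValues (x : List ℕ →₀ ℝ) (t : List ℕ) : |x t| ∈ jhValues x := by
  refine ⟨{{t}}, ⟨t.length, t.length, le_rfl, ?_, by simp⟩, by simp⟩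
  simp only [Finset.mem_singleton, forall_eq]
  exact ⟨by simp [SegL], by simp, ⟨t, by simp⟩, ⟨t, by simp⟩⟩

lemma jhInfNorm_add_single_le (w : List ℕ →₀ ℝ) (t : List ℕ) (l : ℝ) :
    jhInfNorm (w + Finsupp.single t l) ≤ jhInfNorm w + |l| := by
  refine jhInfNorm_le ?_
  rintro r ⟨F, hF, rfl⟩
  obtain ⟨n, m, -, -, hdis⟩ := id hF
  have hsingle : ∑ S ∈ F, |∑ u ∈ S, Finsupp.single t l u| ≤ |l| := by
    simp only [Finsupp.single_apply, Finset.sum_ite_eq, apply_ite, abs_zero,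
      ← Finset.sum_filter, Finset.sum_const, nsmul_eq_mul]
    have : (F.filter (t ∈ ·)).card ≤ 1 := Finset.card_le_one.2 fun S hS S' hS' => by
      simp only [Finset.mem_filter] at hS hS'
      by_contra hne
      exact Finset.disjoint_left.1 (hdis S hS.1 S' hS'.1 hne) hS.2 hS'.2
    exact mul_le_of_le_one_left (abs_nonneg l) (by exact_mod_cast this)
  calc ∑ S ∈ F, |∑ u ∈ S, (w + Finsupp.single t l) u|
      ≤ ∑ S ∈ F, (|∑ u ∈ S, w u| + |∑ u ∈ S, Finsupp.single t l u|) :=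
        Finset.sum_le_sum fun S _ => by
          simpa only [Finsupp.add_apply, Finset.sum_add_distrib] using abs_add_le _ _
    _ ≤ jhInfNorm w + |l| := by
        rw [Finset.sum_add_distrib]
        exact add_le_add (le_jhInfNorm ⟨F, hF, rfl⟩) hsingle

def prefixSeg (s : List ℕ) (n m : ℕ) : Finset (List ℕ) :=
  (Finset.Icc n m).image s.take

lemma mem_prefixSeg {s v : List ℕ} {n m : ℕ} (hm : m ≤ s.length) :
    v ∈ prefixSeg s n m ↔ v <+: s ∧ n ≤ v.length ∧ v.length ≤ m := by
  constructor
  · simp only [prefixSeg, Finset.mem_image, Finset.mem_Icc]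
    rintro ⟨j, ⟨hnj, hjm⟩, rfl⟩
    simp only [List.take_prefix, List.length_take, true_and]
    omega
  · rintro ⟨hv, hn, hm⟩
    exact Finset.mem_image.2 ⟨v.length, Finset.mem_Icc.2 ⟨hn, hm⟩,
      (List.prefix_iff_eq_take.1 hv).symm⟩

lemma segL_of_forall_prefix {S : Finset (List ℕ)} {s : List ℕ} (h : ∀ v ∈ S, v <+: s) :
    SegL S :=
  fun a ha b hb => List.prefix_or_prefix_of_prefix (h a ha) (h b hb)

lemma isNMSeg_prefixSeg {s : List ℕ} {n m : ℕ} (hnm : n ≤ m) (hm : m ≤ s.length) :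
    IsNMSeg (prefixSeg s n m) n m := by
  refine ⟨segL_of_forall_prefix fun v hv => ((mem_prefixSeg hm).1 hv).1,
    fun v hv => ((mem_prefixSeg hm).1 hv).2, ⟨s.take n, ?_, ?_⟩, ⟨s.take m, ?_, ?_⟩⟩ <;>
  simp only [mem_prefixSeg hm, List.take_prefix, List.length_take, true_and] <;> omega

lemma IsNMSeg.le {S : Finset (List ℕ)} {n m : ℕ} (hS : IsNMSeg S n m) : n ≤ m := by
  obtain ⟨t, ht, -⟩ := hS.2.2.1
  exact (hS.2.1 t ht).1.trans (hS.2.1 t ht).2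

lemma IsNMSeg.prefix_of_length_eq {S : Finset (List ℕ)} {n m : ℕ} (hS : IsNMSeg S n m)
    {g : List ℕ} (hg : g ∈ S) (hgm : g.length = m) {v : List ℕ} (hv : v ∈ S) : v <+: g := by
  rcases hS.1 v hv g hg with h | h
  · exact h
  · rw [h.eq_of_length (by have := h.length_le; have := (hS.2.1 v hv).2; omega)]

lemma IsNMSeg.union_prefixSeg {S : Finset (List ℕ)} {n m m' : ℕ} (hS : IsNMSeg S n m)
    {g s : List ℕ} (hg : g ∈ S) (hgm : g.length = m) (hgs : g <+: s) (hmm' : m ≤ m')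
    (hm' : m' ≤ s.length) : IsNMSeg (S ∪ prefixSeg s m m') n m' := by
  have hnm := hS.le
  obtain ⟨t, ht, htn⟩ := hS.2.2.1
  obtain ⟨-, -, -, ⟨t', ht', ht'm⟩⟩ := isNMSeg_prefixSeg hmm' hm'
  refine ⟨segL_of_forall_prefix (s := s) fun v hv => ?_, fun v hv => ?_,
    ⟨t, Finset.mem_union_left _ ht, htn⟩, ⟨t', Finset.mem_union_right _ ht', ht'm⟩⟩
  · rcases Finset.mem_union.1 hv with hv | hv
    · exact (hS.prefix_of_length_eq hg hgm hv).trans hgs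
    · exact ((mem_prefixSeg hm').1 hv).1
  · rcases Finset.mem_union.1 hv with hv | hv
    · have := hS.2.1 v hv; omega
    · have := ((mem_prefixSeg hm').1 hv).2; omega

lemma exists_isNMSeg {S : Finset (List ℕ)} (hS : SegL S) (hne : S.Nonempty) :
    ∃ n m, IsNMSeg S n m := by
  obtain ⟨a, ha, hmin⟩ := S.exists_min_image List.length hne
  obtain ⟨b, hb, hmax⟩ := S.exists_max_image List.length hne
  exact ⟨a.length, b.length, hS, fun t ht => ⟨hmin t ht, hmax t ht⟩, ⟨a, ha, rfl⟩, ⟨b, hb, rfl⟩⟩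

lemma head?_eq_of_prefix {α : Type*} {a b : List α} (h : a <+: b) (ha : a ≠ []) :
    a.head? = b.head? := by
  rw [List.head?_eq_some_head ha, h.head ha, List.head?_eq_some_head]

lemma mem_of_prefix_append_replicate {α : Type*} {v g : List α} {k : ℕ} {c : α}
    (hv : v <+: g ++ List.replicate k c) (hlen : g.length < v.length) : c ∈ v := by
  have hle := hv.length_le
  rw [List.prefix_iff_eq_take.1 hv, List.take_append, List.take_replicate]
  simp only [List.length_append, List.length_replicate] at hle
  exact List.mem_append_right _ (List.mem_replicate.2 ⟨by omega, rfl⟩)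

def nodesBelow (N : ℕ) : Set (List ℕ) :=
  {t | t ≠ [] ∧ t.length ≤ N ∧ ∀ c ∈ t, c < N}

def freshNode (N : ℕ) : List ℕ := N :: List.replicate N 0

lemma self_mem_freshNode (N : ℕ) : N ∈ freshNode N := List.mem_cons_self

lemma nodesBelow_mono : Monotone nodesBelow := fun _ _ h _ ⟨ht, hl, hc⟩ =>
  ⟨ht, hl.trans h, fun c hc' => (hc c hc').trans_le h⟩

lemma freshNode_mem_nodesBelow {N N' : ℕ} (h : N < N') : freshNode N ∈ nodesBelow N' := by
  refine ⟨List.cons_ne_nil _ _, by simpa [freshNode] using h, fun c hc => ?_⟩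
  simp only [freshNode, List.mem_cons, List.mem_replicate] at hc
  omega

lemma iUnion_nodesBelow : ⋃ N, nodesBelow N = {t | t ≠ []} := by
  refine Set.Subset.antisymm (Set.iUnion_subset fun N t ht => ht.1) fun t ht => ?_
  exact Set.mem_iUnion.2 ⟨t.length + t.sum + 1, ht, by omega,
    fun c hc => by have := List.le_sum_of_mem hc; omega⟩

section Padding

/-- `S` prolonged above its top node `g` (of level `m`) by entries `c`, up to level `m'`. -/
def padSeg (S : Finset (List ℕ)) (g : List ℕ) (m m' c : ℕ) : Finset (List ℕ) :=
  S ∪ prefixSeg (g ++ List.replicate (m' - m) c) m m'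

def freshSeg (N n m' : ℕ) : Finset (List ℕ) :=
  prefixSeg (freshNode N ++ List.replicate (m' - (N + 1)) 0) n m'

variable {S : Finset (List ℕ)} {g : List ℕ} {n m m' c : ℕ}

lemma length_append_replicate_sub (hgm : g.length = m) (hmm' : m ≤ m') :
    (g ++ List.replicate (m' - m) c).length = m' := by
  simp only [List.length_append, List.length_replicate]; omega

lemma isNMSeg_padSeg (hS : IsNMSeg S n m) (hg : g ∈ S) (hgm : g.length = m) (hmm' : m ≤ m') :
    IsNMSeg (padSeg S g m m' c) n m' :=
  hS.union_prefixSeg hg hgm (List.prefix_append _ _) hmm'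
    (length_append_replicate_sub hgm hmm').ge

lemma IsNMSeg.mem_padSeg (hS : IsNMSeg S n m) (hg : g ∈ S) (hgm : g.length = m)
    (hmm' : m ≤ m') {v : List ℕ} (hv : v ∈ padSeg S g m m' c) :
    v <+: g ++ List.replicate (m' - m) c ∧ (v ∈ S ∨ m < v.length ∧ g <+: v ∧ c ∈ v) := by
  have hg_ext : g <+: g ++ List.replicate (m' - m) c := List.prefix_append _ _
  rcases Finset.mem_union.1 hv with hvS | hvP
  · exact ⟨(hS.prefix_of_length_eq hg hgm hvS).trans hg_ext, Or.inl hvS⟩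
  · obtain ⟨hpre, hmv, -⟩ := (mem_prefixSeg (length_append_replicate_sub hgm hmm').ge).1 hvP
    have hgv : g <+: v := List.prefix_of_prefix_length_le hg_ext hpre (hgm ▸ hmv)
    refine ⟨hpre, ?_⟩
    rcases hmv.lt_or_eq with hlt | heq
    · exact Or.inr ⟨hlt, hgv, mem_of_prefix_append_replicate hpre (hgm ▸ hlt)⟩
    · exact Or.inl (hgv.eq_of_length (by rw [hgm, heq]) ▸ hg)

lemma IsNMSeg.disjoint_padSeg {A B : Finset (List ℕ)} {gA gB : List ℕ} (hA : IsNMSeg A n m)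
    (hB : IsNMSeg B n m) (hgA : gA ∈ A) (hgB : gB ∈ B) (hgAm : gA.length = m)
    (hgBm : gB.length = m) (hmm' : m ≤ m') (hAB : Disjoint A B) :
    Disjoint (padSeg A gA m m' c) (padSeg B gB m m' c) := by
  have hd := Finset.disjoint_left.1 hAB
  refine Finset.disjoint_left.2 fun v hvA hvB => ?_
  rcases (hA.mem_padSeg hgA hgAm hmm' hvA).2 with hvA' | ⟨hmA, htA, -⟩ <;>
    rcases (hB.mem_padSeg hgB hgBm hmm' hvB).2 with hvB' | ⟨hmB, htB, -⟩
  · exact hd hvA' hvB'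
  · have := (hA.2.1 v hvA').2; omega
  · have := (hB.2.1 v hvB').2; omega
  · -- both tops are the level-`m` node below `v`
    have : gA = gB := (List.prefix_of_prefix_length_le htA htB (by rw [hgAm, hgBm])).eq_of_length
      (by rw [hgAm, hgBm])
    exact hd hgA (this ▸ hgB)

lemma IsNMSeg.head?_of_mem_padSeg (hS : IsNMSeg S n m) (hn : 1 ≤ n) (hg : g ∈ S)
    (hgm : g.length = m) (hmm' : m ≤ m') {u v : List ℕ} (hu : u ∈ S)
    (hv : v ∈ padSeg S g m m' c) : v.head? = u.head? := by
  have hne : ∀ t ∈ padSeg S g m m' c, t ≠ [] := fun t ht h => by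
    have := ((isNMSeg_padSeg hS hg hgm hmm').2.1 t ht).1
    simp only [h, List.length_nil] at this
    omega
  have hu' : u ∈ padSeg S g m m' c := Finset.mem_union_left _ hu
  rw [head?_eq_of_prefix (hS.mem_padSeg hg hgm hmm' hv).1 (hne v hv),
    head?_eq_of_prefix (hS.mem_padSeg hg hgm hmm' hu').1 (hne u hu')]

lemma IsNMSeg.sum_padSeg (hS : IsNMSeg S n m) (hg : g ∈ S) (hgm : g.length = m)
    (hmm' : m ≤ m') {f : List ℕ → ℝ} (hf : ∀ v, c ∈ v → f v = 0) :
    ∑ v ∈ padSeg S g m m' c, f v = ∑ v ∈ S, f v := by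
  refine (Finset.sum_subset Finset.subset_union_left fun v hvE hvS => ?_).symm
  rcases (hS.mem_padSeg hg hgm hmm' hvE).2 with h | ⟨-, -, hc⟩
  · exact absurd h hvS
  · exact hf v hc

lemma isNMSeg_freshSeg {N : ℕ} (hnm' : n ≤ m') (hN : N + 1 ≤ m') :
    IsNMSeg (freshSeg N n m') n m' :=
  isNMSeg_prefixSeg hnm' (by simp [freshNode]; omega)

lemma head?_of_mem_freshSeg {N : ℕ} (hn : 1 ≤ n) (hN : N + 1 ≤ m') {v : List ℕ}
    (hv : v ∈ freshSeg N n m') : v.head? = some N := by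
  obtain ⟨hpre, hnv, -⟩ := (mem_prefixSeg (by simp [freshNode]; omega)).1 hv
  rw [head?_eq_of_prefix hpre (List.ne_nil_of_length_pos (by omega))]
  simp [freshNode]

lemma freshNode_mem_freshSeg {N : ℕ} (hn : n ≤ N + 1) (hN : N + 1 ≤ m') :
    freshNode N ∈ freshSeg N n m' :=
  (mem_prefixSeg (by simp [freshNode]; omega)).2
    ⟨List.prefix_append _ _, by simpa [freshNode] using hn, by simpa [freshNode] using hN⟩

end Padding

lemma admissibleAt_insert_image {F : Finset (Finset (List ℕ))} {n m' : ℕ}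
    {E : Finset (List ℕ) → Finset (List ℕ)} {T : Finset (List ℕ)}
    (hnm' : n ≤ m') (hE : ∀ S ∈ F, IsNMSeg (E S) n m')
    (hEE : ∀ A ∈ F, ∀ B ∈ F, A ≠ B → Disjoint (E A) (E B)) (hT : IsNMSeg T n m')
    (hET : ∀ S ∈ F, Disjoint (E S) T) :
    AdmissibleAt (insert T (F.image E)) n m' := by
  refine ⟨hnm', fun S' hS' => ?_, fun A' hA' B' hB' hne => ?_⟩
  · simp only [Finset.mem_insert, Finset.mem_image] at hS'
    rcases hS' with rfl | ⟨S, hS, rfl⟩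
    exacts [hT, hE S hS]
  · simp only [Finset.mem_insert, Finset.mem_image] at hA' hB'
    rcases hA' with rfl | ⟨A, hA, rfl⟩ <;> rcases hB' with rfl | ⟨B, hB, rfl⟩
    · exact absurd rfl hne
    · exact (hET B hB).symm
    · exact hET A hA
    · exact hEE A hA B hB fun h => hne (h ▸ rfl)

lemma sum_insert_image {α β M : Type*} [DecidableEq β] [AddCommMonoid M] {F : Finset (Finset α)}
    {E : Finset α → Finset β} {T : Finset β} (hE : ∀ S ∈ F, (E S).Nonempty) (hT : T.Nonempty)
    (hEE : ∀ A ∈ F, ∀ B ∈ F, A ≠ B → Disjoint (E A) (E B)) (hET : ∀ S ∈ F, Disjoint (E S) T)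
    (φ : Finset β → M) :
    ∑ S' ∈ insert T (F.image E), φ S' = ∑ S ∈ F, φ (E S) + φ T := by
  have hinj : Set.InjOn E F := fun A hA B hB hAB => by
    by_contra hne
    have := hEE A hA B hB hne
    rw [← hAB, Finset.disjoint_self_iff_empty] at this
    exact (hE A hA).ne_empty this
  have hT_notMem : T ∉ F.image E := by
    simp only [Finset.mem_image, not_exists, not_and]
    intro S hS hST
    have := hET S hS
    rw [hST, Finset.disjoint_self_iff_empty] at this
    exact hT.ne_empty this
  rw [Finset.sum_insert hT_notMem, Finset.sum_image hinj, add_comm]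

section Peeling

variable {w : List ℕ →₀ ℝ} {N : ℕ}

lemma apply_eq_zero_of_mem (hw : ↑w.support ⊆ nodesBelow N) {v : List ℕ} (hv : N ∈ v) :
    w v = 0 :=
  Finsupp.notMem_support_iff.1 fun h => lt_irrefl N ((hw h).2.2 N hv)

/-- The segments are padded up to the level `m' = max m (N + 1)` reached by `freshSeg`, which is
disjoint from them because its nodes start with `N` while theirs start like a support node. -/
lemma add_abs_mem_jhValues_add_single (hw : ↑w.support ⊆ nodesBelow N) (l : ℝ)
    {F : Finset (Finset (List ℕ))} {n m : ℕ} (hF : AdmissibleAt F n m) (hn : 1 ≤ n)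
    (hsupp : ∀ S ∈ F, ∃ u ∈ S, u ∈ w.support) (hFne : F.Nonempty) :
    ∑ S ∈ F, |∑ t ∈ S, w t| + |l| ∈ jhValues (w + Finsupp.single (freshNode N) l) := by
  obtain ⟨hnm, hseg, hdis⟩ := hF
  have hnN : n ≤ N := by
    obtain ⟨S, hS⟩ := hFne
    obtain ⟨u, huS, hu⟩ := hsupp S hS
    exact ((hseg S hS).2.1 u huS).1.trans (hw hu).2.1
  set m' := max m (N + 1)
  have hmm' : m ≤ m' := le_max_left _ _
  have hNm' : N + 1 ≤ m' := le_max_right _ _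
  choose! top htop htopm using fun S hS => (hseg S hS).2.2.2
  set E : Finset (List ℕ) → Finset (List ℕ) := fun S => padSeg S (top S) m m' N
  have hE_head : ∀ S ∈ F, ∀ v ∈ E S, v.head? ≠ some N := by
    intro S hS v hv hvN
    obtain ⟨u, huS, hu⟩ := hsupp S hS
    rw [(hseg S hS).head?_of_mem_padSeg hn (htop S hS) (htopm S hS) hmm' huS hv] at hvN
    exact lt_irrefl N ((hw hu).2.2 N (List.mem_of_mem_head? hvN))
  have hET : ∀ S ∈ F, Disjoint (E S) (freshSeg N n m') := fun S hS =>
    Finset.disjoint_left.2 fun v hvE hvT =>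
      hE_head S hS v hvE (head?_of_mem_freshSeg hn hNm' hvT)
  have hEE : ∀ A ∈ F, ∀ B ∈ F, A ≠ B → Disjoint (E A) (E B) := fun A hA B hB hAB =>
    (hseg A hA).disjoint_padSeg (hseg B hB) (htop A hA) (htop B hB) (htopm A hA)
      (htopm B hB) hmm' (hdis A hA B hB hAB)
  have hE_sum : ∀ S ∈ F, ∑ v ∈ E S, (w + Finsupp.single (freshNode N) l) v = ∑ v ∈ S, w v := by
    intro S hS
    rw [Finset.sum_congr rfl fun v hv => by
      rw [Finsupp.add_apply, Finsupp.single_eq_of_ne fun h => hE_head S hS v hv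
        (by simp [h, freshNode]), add_zero]]
    exact (hseg S hS).sum_padSeg (htop S hS) (htopm S hS) hmm' fun v => apply_eq_zero_of_mem hw
  have hT_sum : ∑ v ∈ freshSeg N n m', (w + Finsupp.single (freshNode N) l) v = l := by
    rw [Finset.sum_congr rfl fun v hv => by
      rw [Finsupp.add_apply, apply_eq_zero_of_mem hw
        (List.mem_of_mem_head? (head?_of_mem_freshSeg hn hNm' hv)), zero_add]]
    simp [Finsupp.single_apply, freshNode_mem_freshSeg (hnN.trans N.le_succ) hNm']
  refine ⟨insert (freshSeg N n m') (F.image E),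
    ⟨n, m', admissibleAt_insert_image (hnm.trans hmm')
      (fun S hS => isNMSeg_padSeg (hseg S hS) (htop S hS) (htopm S hS) hmm') hEE
      (isNMSeg_freshSeg (hnm.trans hmm') hNm') hET⟩, ?_⟩
  rw [sum_insert_image (E := E) (fun S hS => ⟨top S, Finset.mem_union_left _ (htop S hS)⟩)
    ⟨_, freshNode_mem_freshSeg (hnN.trans N.le_succ) hNm'⟩ hEE hET, hT_sum]
  exact congrArg (· + |l|) (Finset.sum_congr rfl fun S hS => by rw [hE_sum S hS])

/-- Segments with zero sum can be dropped; if the family starts at the root, it has a single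
segment left, from which the root (where `w` vanishes) can be removed. -/
lemma exists_admissibleAt_of_mem_jhValues (hw0 : w [] = 0) {r : ℝ} (hr : r ∈ jhValues w) :
    r = 0 ∨ ∃ F n m, AdmissibleAt F n m ∧ 1 ≤ n ∧ F.Nonempty ∧
      (∀ S ∈ F, ∃ u ∈ S, u ∈ w.support) ∧ r = ∑ S ∈ F, |∑ t ∈ S, w t| := by
  obtain ⟨F, ⟨n, m, hnm, hseg, hdis⟩, rfl⟩ := hr
  set F₁ := F.filter fun S => ∑ t ∈ S, w t ≠ 0
  have hval : ∑ S ∈ F₁, |∑ t ∈ S, w t| = ∑ S ∈ F, |∑ t ∈ S, w t| :=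
    Finset.sum_filter_of_ne fun S _ h => by simpa using h
  have hsupp : ∀ S ∈ F₁, ∃ u ∈ S, u ∈ w.support := by
    intro S hS
    by_contra! h
    exact (Finset.mem_filter.1 hS).2
      (Finset.sum_eq_zero fun u hu => Finsupp.notMem_support_iff.1 (h u hu))
  have hF₁ : AdmissibleAt F₁ n m := ⟨hnm, fun S hS => hseg S (Finset.filter_subset _ _ hS),
    fun S hS S' hS' => hdis S (Finset.filter_subset _ _ hS) S' (Finset.filter_subset _ _ hS')⟩
  rcases F₁.eq_empty_or_nonempty with h₀ | hne
  · exact Or.inl (by rw [← hval, h₀, Finset.sum_empty])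
  right
  rcases Nat.eq_zero_or_pos n with rfl | hn
  · obtain ⟨S₀, hS₀⟩ := hne
    have hroot : ∀ S ∈ F₁, [] ∈ S := fun S hS => by
      obtain ⟨t, ht, ht0⟩ := (hF₁.2.1 S hS).2.2.1
      rwa [List.length_eq_zero_iff.1 ht0] at ht
    have hF₁_eq : F₁ = {S₀} := Finset.eq_singleton_iff_unique_mem.2 ⟨hS₀, fun S hS => by
      by_contra h
      exact Finset.disjoint_left.1 (hF₁.2.2 S hS S₀ hS₀ h) (hroot S hS) (hroot S₀ hS₀)⟩
    obtain ⟨u, huS, hu⟩ := hsupp S₀ hS₀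
    have huS' : u ∈ S₀.erase [] :=
      Finset.mem_erase.2 ⟨fun h => Finsupp.mem_support_iff.1 hu (h ▸ hw0), huS⟩
    obtain ⟨n', m', hS'⟩ := exists_isNMSeg (fun a ha b hb => (hF₁.2.1 S₀ hS₀).1 a
      (Finset.erase_subset _ _ ha) b (Finset.erase_subset _ _ hb)) ⟨u, huS'⟩
    have hn' : 1 ≤ n' := by
      obtain ⟨t, ht, rfl⟩ := hS'.2.2.1
      exact List.length_pos_of_ne_nil (Finset.ne_of_mem_erase ht)
    refine ⟨{S₀.erase []}, n', m', ⟨hS'.le, by simpa using hS', by simp⟩, hn',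
      Finset.singleton_nonempty _, fun S hS => Finset.mem_singleton.1 hS ▸ ⟨u, huS', hu⟩, ?_⟩
    rw [← hval, hF₁_eq, Finset.sum_singleton, Finset.sum_singleton, Finset.sum_erase _ hw0]
  · exact ⟨F₁, n, m, hF₁, hn, hne, hsupp, hval.symm⟩

theorem jhInfNorm_add_single_freshNode (hw : ↑w.support ⊆ nodesBelow N) (l : ℝ) :
    jhInfNorm (w + Finsupp.single (freshNode N) l) = jhInfNorm w + |l| := by
  refine le_antisymm (jhInfNorm_add_single_le w _ l) ?_
  have hw0 : w [] = 0 := Finsupp.notMem_support_iff.1 fun h => (hw h).1 rfl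
  suffices h : ∀ r ∈ jhValues w, r + |l| ≤ jhInfNorm (w + Finsupp.single (freshNode N) l) by
    linarith [jhInfNorm_le fun r hr => le_sub_iff_add_le.2 (h r hr)]
  intro r hr
  rcases exists_admissibleAt_of_mem_jhValues hw0 hr with rfl | ⟨F, n, m, hF, hn, hne, hsupp, rfl⟩
  · have := abs_mem_jhValues (w + Finsupp.single (freshNode N) l) (freshNode N)
    rw [Finsupp.add_apply, apply_eq_zero_of_mem hw (self_mem_freshNode N), Finsupp.single_eq_same,
      zero_add] at this
    simpa using le_jhInfNorm this
  · exact le_jhInfNorm (add_abs_mem_jhValues_add_single hw l hF hn hsupp hne)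

end Peeling

open Filter Topology

def OctahedralNorm (X : Type*) [NormedAddCommGroup X] [NormedSpace ℝ X] : Prop :=
  ∀ ε : ℝ, 0 < ε → ∀ Y : Submodule ℝ X, FiniteDimensional ℝ Y →
    ∃ x : X, ‖x‖ = 1 ∧ ∀ y ∈ Y, ∀ l : ℝ, (1 - ε) * (|l| + ‖y‖) ≤ ‖l • x + y‖

def AlmostDaugavet (X : Type*) [NormedAddCommGroup X] [NormedSpace ℝ X] : Prop :=
  ∃ Y : Submodule ℝ (X →L[ℝ] ℝ),
    (∀ x : X, ‖x‖ = sSup {r : ℝ | ∃ g ∈ Y, ‖g‖ ≤ 1 ∧ r = g x}) ∧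
    ∀ x : X, ∀ g ∈ Y, ‖ContinuousLinearMap.id ℝ X + g.smulRight x‖ = 1 + ‖g.smulRight x‖

section Dual

variable {X : Type*} [NormedAddCommGroup X] [NormedSpace ℝ X]

lemma apply_le_norm {f : StrongDual ℝ X} (hf : ‖f‖ ≤ 1) (x : X) : f x ≤ ‖x‖ :=
  (le_abs_self _).trans <| (f.le_opNorm x).trans (mul_le_of_le_one_left (norm_nonneg x) hf)

/-- Banach–Alaoglu: a weak-* cluster point of the `f n`. -/
lemma exists_dual_eventually_eq (f : ℕ → StrongDual ℝ X) (hf : ∀ n, ‖f n‖ ≤ 1) :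
    ∃ g : StrongDual ℝ X, ‖g‖ ≤ 1 ∧ ∀ x L, (∀ᶠ n in atTop, f n x = L) → g x = L := by
  obtain ⟨g, hg, hclus⟩ := WeakDual.isCompact_closedBall (𝕜 := ℝ) (E := X) 0 1
    (f := map (fun n => StrongDual.toWeakDual (f n)) atTop)
    (le_principal_iff.2 <| Eventually.of_forall (f := atTop) fun n => by simpa using hf n)
  refine ⟨WeakDual.toStrongDual g, by simpa using hg, fun x L hL => ?_⟩
  have hL' : Tendsto (fun n => f n x) atTop (𝓟 {L}) := tendsto_principal.2 hL
  have := hclus.map (WeakDual.eval_continuous x).continuousAt (tendsto_map'_iff.2 hL')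
  simpa using mem_closure_iff_clusterPt.2 this

lemma apply_eq_norm_of_apply_add_sum {f : StrongDual ℝ X} (hf : ‖f‖ ≤ 1) {ι : Type*}
    {s : Finset ι} {v : X} {x : ι → X} (h : f (v + ∑ i ∈ s, x i) = ‖v‖ + ∑ i ∈ s, ‖x i‖) :
    f v = ‖v‖ ∧ ∀ i ∈ s, f (x i) = ‖x i‖ := by
  rw [map_add, map_sum] at h
  have hv := apply_le_norm hf v
  have hx : ∑ i ∈ s, f (x i) ≤ ∑ i ∈ s, ‖x i‖ :=
    Finset.sum_le_sum fun i _ => apply_le_norm hf (x i)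
  exact ⟨by linarith, (Finset.sum_eq_sum_iff_of_le fun i _ => apply_le_norm hf (x i)).1
    (by linarith)⟩

lemma norm_eq_sSup_of_denseRange {u : ℕ → X} (hu : DenseRange u)
    {Y : Submodule ℝ (StrongDual ℝ X)} (hY : ∀ j, ∃ g ∈ Y, ‖g‖ ≤ 1 ∧ g (u j) = ‖u j‖) (x : X) :
    ‖x‖ = sSup {r : ℝ | ∃ g ∈ Y, ‖g‖ ≤ 1 ∧ r = g x} := by
  have hle : ∀ r ∈ {r : ℝ | ∃ g ∈ Y, ‖g‖ ≤ 1 ∧ r = g x}, r ≤ ‖x‖ := by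
    rintro r ⟨g, -, hg, rfl⟩
    exact apply_le_norm hg x
  refine le_antisymm (le_of_forall_pos_le_add fun η hη => ?_)
    (csSup_le ⟨0, 0, Y.zero_mem, by simp, by simp⟩ hle)
  obtain ⟨j, hj⟩ := hu.exists_dist_lt x (half_pos hη)
  obtain ⟨g, hgY, hg1, hgu⟩ := hY j
  rw [dist_eq_norm] at hj
  have hgx : ‖u j‖ - ‖x - u j‖ ≤ g x := by
    have := apply_le_norm hg1 (u j - x)
    rw [map_sub, hgu, norm_sub_rev] at this
    linarith
  have := le_csSup ⟨‖x‖, hle⟩ ⟨g, hgY, hg1, rfl⟩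
  linarith [norm_le_norm_add_norm_sub' x (u j)]

lemma norm_id_add_smulRight_eq (g : StrongDual ℝ X) (x : X)
    (h : ∀ δ > 0, ∃ z : X, ‖z‖ ≤ 1 ∧ g z = ‖g‖ ∧ 1 + ‖g‖ * ‖x‖ - δ ≤ ‖z + ‖g‖ • x‖) :
    ‖ContinuousLinearMap.id ℝ X + g.smulRight x‖ = 1 + ‖g.smulRight x‖ := by
  rw [ContinuousLinearMap.norm_smulRight_apply]
  refine le_antisymm ?_ (le_of_forall_pos_le_add fun δ hδ => ?_)
  · refine (norm_add_le _ _).trans ?_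
    rw [ContinuousLinearMap.norm_smulRight_apply]
    linarith [ContinuousLinearMap.norm_id_le (𝕜 := ℝ) (E := X)]
  · obtain ⟨z, hz1, hgz, hz⟩ := h δ hδ
    set T := ContinuousLinearMap.id ℝ X + g.smulRight x
    have hTz : T z = z + ‖g‖ • x := by simp [T, hgz]
    have : ‖T z‖ ≤ ‖T‖ := (T.le_opNorm z).trans (mul_le_of_le_one_right (norm_nonneg _) hz1)
    rw [hTz] at this
    linarith

end Dual

structure L1OrthogonalSequence (X : Type*) [NormedAddCommGroup X] [NormedSpace ℝ X] where
  u : ℕ → X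
  y : ℕ → X
  W : ℕ → Submodule ℝ X
  denseRange_u : DenseRange u
  u_mem : ∀ ⦃i m : ℕ⦄, i ≤ m → u i ∈ W m
  y_mem : ∀ ⦃i m : ℕ⦄, i < m → y i ∈ W m
  norm_add_smul_y : ∀ m, ∀ v ∈ W m, ∀ l : ℝ, ‖v + l • y m‖ = ‖v‖ + |l|

def signPattern (φ : ℕ → Finset ℕ) (j m : ℕ) : ℝ :=
  if j ∈ φ (Nat.unpair m).1 then 1 else -1

lemma abs_signPattern (φ : ℕ → Finset ℕ) (j m : ℕ) : |signPattern φ j m| = 1 := by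
  unfold signPattern; split_ifs <;> simp

lemma exists_signPattern_eq {φ : ℕ → Finset ℕ} (hφ : Function.Surjective φ) (c : ℕ →₀ ℝ)
    (N : ℕ) : ∃ m, N < m ∧ ∀ j ∈ c.support, j < m ∧ c j * signPattern φ j m = |c j| := by
  obtain ⟨a, ha⟩ := hφ (c.support.filter (0 < c ·))
  have hpair := Nat.right_le_pair a (N + 1 + c.support.sup id)
  refine ⟨Nat.pair a (N + 1 + c.support.sup id), by omega, fun j hj => ⟨?_, ?_⟩⟩
  · have : j ≤ c.support.sup id := Finset.le_sup (f := id) hj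
    omega
  · simp only [signPattern, Nat.unpair_pair, ha, Finset.mem_filter, hj, true_and]
    split_ifs with h
    · rw [mul_one, abs_of_pos h]
    · rw [abs_of_nonpos (not_lt.1 h)]; ring

namespace L1OrthogonalSequence

variable {X : Type*} [NormedAddCommGroup X] [NormedSpace ℝ X]

lemma norm_y (P : L1OrthogonalSequence X) (m : ℕ) : ‖P.y m‖ = 1 := by
  simpa using P.norm_add_smul_y m 0 (Submodule.zero_mem _) 1

lemma norm_add_sum (P : L1OrthogonalSequence X) {A : Finset ℕ} {v : X}
    (hv : ∀ m ∈ A, v ∈ P.W m) (a : ℕ → ℝ) :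
    ‖v + ∑ m ∈ A, a m • P.y m‖ = ‖v‖ + ∑ m ∈ A, |a m| := by
  induction A using Finset.induction_on_max with
  | empty => simp
  | insert b A hlt ih =>
    have hb : b ∉ A := fun h => lt_irrefl b (hlt b h)
    have hmem : v + ∑ m ∈ A, a m • P.y m ∈ P.W b :=
      add_mem (hv b (Finset.mem_insert_self _ _))
        (Submodule.sum_mem _ fun m hm => Submodule.smul_mem _ _ (P.y_mem (hlt m hm)))
    rw [Finset.sum_insert hb, Finset.sum_insert hb, add_left_comm, add_comm (a b • P.y b),
      ← add_assoc, P.norm_add_smul_y b _ hmem, ih fun m hm => hv m (Finset.mem_insert_of_mem hm)]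
    ring

lemma exists_forall_norm_add_ge (P : L1OrthogonalSequence X) {K : Set X} (hK : IsCompact K)
    {ε : ℝ} (hε : 0 < ε) :
    ∃ m₀, ∀ m ≥ m₀, ∀ k ∈ K, ∀ t : ℝ, 0 ≤ t → ∀ l : ℝ,
      |l| + t * ‖k‖ - ε * t ≤ ‖l • P.y m + t • k‖ := by
  obtain ⟨m₀, hm₀⟩ := hK.elim_directed_cover (fun m => ⋃ i ≤ m, Metric.ball (P.u i) (ε / 2))
    (fun m => isOpen_biUnion fun i _ => Metric.isOpen_ball)
    (fun k _ => by
      obtain ⟨i, hi⟩ := P.denseRange_u.exists_dist_lt k (half_pos hε)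
      exact Set.mem_iUnion.2 ⟨i, Set.mem_iUnion₂.2 ⟨i, le_rfl, hi⟩⟩)
    (Monotone.directed_le fun a b hab => Set.iUnion₂_mono' fun i hi => ⟨i, hi.trans hab, le_rfl⟩)
  refine ⟨m₀, fun m hm k hk t ht l => ?_⟩
  obtain ⟨i, hi, hki⟩ : ∃ i ≤ m₀, ‖k - P.u i‖ < ε / 2 := by
    simpa [dist_eq_norm] using hm₀ hk
  have hpeel := P.norm_add_smul_y m (t • P.u i) (Submodule.smul_mem _ _ (P.u_mem (hi.trans hm))) l
  rw [norm_smul, Real.norm_of_nonneg ht] at hpeel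
  have htri : ‖t • P.u i + l • P.y m‖ ≤ ‖l • P.y m + t • k‖ + t * ‖k - P.u i‖ := by
    have : t • P.u i + l • P.y m = (l • P.y m + t • k) - t • (k - P.u i) := by
      rw [smul_sub]; abel
    rw [this]
    calc _ ≤ ‖l • P.y m + t • k‖ + ‖t • (k - P.u i)‖ := norm_sub_le _ _
      _ = _ := by rw [norm_smul, Real.norm_of_nonneg ht]
  have hk : ‖k‖ ≤ ‖P.u i‖ + ‖k - P.u i‖ := norm_le_norm_add_norm_sub' k (P.u i)
  nlinarith

theorem octahedralNorm (P : L1OrthogonalSequence X) : OctahedralNorm X := by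
  intro ε hε Y hY
  obtain ⟨m, hm⟩ := P.exists_forall_norm_add_ge
    ((isCompact_sphere (0 : Y) 1).image continuous_subtype_val) hε
  refine ⟨P.y m, P.norm_y m, fun y hy l => ?_⟩
  rcases eq_or_ne y 0 with rfl | hy0
  · rw [add_zero, norm_smul, P.norm_y, norm_zero, add_zero, Real.norm_eq_abs, mul_one]
    exact mul_le_of_le_one_left (abs_nonneg l) (by linarith)
  · have hk : ‖y‖⁻¹ • y ∈ ((↑) '' Metric.sphere (0 : Y) 1 : Set X) :=
      ⟨⟨‖y‖⁻¹ • y, Y.smul_mem _ hy⟩, by simp [norm_smul, hy0], rfl⟩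
    have := hm m le_rfl _ hk ‖y‖ (norm_nonneg _) l
    rw [smul_inv_smul₀ (norm_ne_zero_iff.2 hy0), norm_smul, norm_inv, norm_norm,
      inv_mul_cancel₀ (norm_ne_zero_iff.2 hy0)] at this
    nlinarith [mul_nonneg hε.le (abs_nonneg l)]

/-- The functionals are weak-* limits of norming functionals of
`u j + ∑ m ∈ Ioc j n, σ m • y m`, whose norm is additive in the summands. -/
lemma exists_dual_apply_y (P : L1OrthogonalSequence X) (j : ℕ) {σ : ℕ → ℝ} (hσ : ∀ m, |σ m| = 1) :
    ∃ g : StrongDual ℝ X, ‖g‖ ≤ 1 ∧ g (P.u j) = ‖P.u j‖ ∧ ∀ m, j < m → g (P.y m) = σ m := by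
  have key : ∀ n, ∃ f : StrongDual ℝ X, ‖f‖ ≤ 1 ∧ f (P.u j) = ‖P.u j‖ ∧
      ∀ m ∈ Finset.Ioc j n, f (P.y m) = σ m := by
    intro n
    obtain ⟨f, hf1, hf⟩ := exists_dual_vector'' ℝ (P.u j + ∑ m ∈ Finset.Ioc j n, σ m • P.y m)
    have hnorm : ∀ m, ‖σ m • P.y m‖ = |σ m| := fun m => by
      rw [norm_smul, P.norm_y, mul_one, Real.norm_eq_abs]
    rw [P.norm_add_sum (fun m hm => P.u_mem (Finset.mem_Ioc.1 hm).1.le),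
      ← Finset.sum_congr rfl fun m _ => hnorm m] at hf
    obtain ⟨hfu, hfy⟩ := apply_eq_norm_of_apply_add_sum hf1 hf
    refine ⟨f, hf1, hfu, fun m hm => ?_⟩
    have hσm : σ m * f (P.y m) = 1 := by
      rw [← smul_eq_mul, ← map_smul, hfy m hm, hnorm, hσ]
    have hσ2 : σ m * σ m = 1 := by rw [← abs_mul_abs_self, hσ, one_mul]
    calc f (P.y m) = σ m * σ m * f (P.y m) := by rw [hσ2, one_mul]
      _ = σ m := by rw [mul_assoc, hσm, mul_one]
  choose f hf using key
  obtain ⟨g, hg1, hg⟩ := exists_dual_eventually_eq f fun n => (hf n).1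
  exact ⟨g, hg1, hg _ _ (Eventually.of_forall fun n => (hf n).2.1), fun m hjm =>
    hg _ _ ((eventually_ge_atTop m).mono fun n hn => (hf n).2.2 m (Finset.mem_Ioc.2 ⟨hjm, hn⟩))⟩

theorem almostDaugavet (P : L1OrthogonalSequence X) : AlmostDaugavet X := by
  obtain ⟨φ, hφ⟩ := exists_surjective_nat (Finset ℕ)
  choose g hg1 hgu hgy using fun j => P.exists_dual_apply_y j (abs_signPattern φ j)
  refine ⟨Submodule.span ℝ (Set.range g), norm_eq_sSup_of_denseRange P.denseRange_u fun j =>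
    ⟨g j, Submodule.subset_span ⟨j, rfl⟩, hg1 j, hgu j⟩, fun x G hG => ?_⟩
  obtain ⟨c, rfl⟩ := Finsupp.mem_span_range_iff_exists_finsupp.1 hG
  set G := c.sum fun j a => a • g j
  set s := ∑ j ∈ c.support, |c j|
  have hs : 0 ≤ s := Finset.sum_nonneg fun j _ => abs_nonneg _
  have hattain : ∀ N, ∃ m, N < m ∧ G (P.y m) = s := by
    intro N
    obtain ⟨m, hNm, hm⟩ := exists_signPattern_eq hφ c N
    refine ⟨m, hNm, ?_⟩
    simp only [G, Finsupp.sum, sum_apply, smul_apply, smul_eq_mul]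
    exact Finset.sum_congr rfl fun j hj => by rw [hgy j m (hm j hj).1, (hm j hj).2]
  have hnorm : ‖G‖ = s := by
    refine le_antisymm ((norm_sum_le _ _).trans (Finset.sum_le_sum fun j _ => ?_)) ?_
    · rw [norm_smul, Real.norm_eq_abs]
      exact mul_le_of_le_one_right (abs_nonneg _) (hg1 j)
    · obtain ⟨m, -, hm⟩ := hattain 0
      calc s = G (P.y m) := hm.symm
        _ ≤ ‖G‖ * ‖P.y m‖ := (Real.le_norm_self _).trans (G.le_opNorm _)
        _ = ‖G‖ := by rw [P.norm_y, mul_one]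
  refine norm_id_add_smulRight_eq _ x fun δ hδ => ?_
  obtain ⟨m₀, hm₀⟩ := P.exists_forall_norm_add_ge (isCompact_singleton (x := x))
    (div_pos hδ (by linarith : (0 : ℝ) < s + 1))
  obtain ⟨m, hm, hGm⟩ := hattain m₀
  refine ⟨P.y m, (P.norm_y m).le, hGm.trans hnorm.symm, ?_⟩
  have := hm₀ m hm.le x rfl s hs 1
  rw [one_smul, abs_one] at this
  have hδs : δ / (s + 1) * s ≤ δ := by
    rw [div_mul_eq_mul_div, div_le_iff₀ (by linarith)]; nlinarith
  rw [hnorm]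
  linarith

end L1OrthogonalSequence

section JHSpace

variable {X : Type*} [NormedAddCommGroup X] [NormedSpace ℝ X] {e : List ℕ → X}

lemma norm_add_smul_freshNode
    (hnorm : ∀ x : (List ℕ) →₀ ℝ, x [] = 0 → ‖∑ t ∈ x.support, x t • e t‖ = jhInfNorm x)
    {N : ℕ} {v : X} (hv : v ∈ Submodule.span ℝ (e '' nodesBelow N)) (l : ℝ) :
    ‖v + l • e (freshNode N)‖ = ‖v‖ + |l| := by
  have hnorm' : ∀ z : List ℕ →₀ ℝ, z [] = 0 →
      ‖Finsupp.linearCombination ℝ e z‖ = jhInfNorm z := fun z hz => by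
    rw [Finsupp.linearCombination_apply, Finsupp.sum]
    exact hnorm z hz
  obtain ⟨z, hz, rfl⟩ := (Finsupp.mem_span_image_iff_linearCombination ℝ).1 hv
  have hz' : ↑z.support ⊆ nodesBelow N := (Finsupp.mem_supported ℝ z).1 hz
  have hz0 : z [] = 0 := Finsupp.notMem_support_iff.1 fun h => (hz' h).1 rfl
  have hsum0 : (z + Finsupp.single (freshNode N) l) [] = 0 := by
    simp [hz0, freshNode]
  rw [← Finsupp.linearCombination_single ℝ, ← map_add, hnorm' _ hsum0, hnorm' z hz0,
    jhInfNorm_add_single_freshNode hz' l]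

lemma exists_mem_span_nodesBelow {v : X} (hv : v ∈ Submodule.span ℝ (e '' {t | t ≠ []})) :
    ∃ N, v ∈ Submodule.span ℝ (e '' nodesBelow N) := by
  rw [← iUnion_nodesBelow, Set.image_iUnion, Submodule.span_iUnion] at hv
  exact (Submodule.mem_iSup_of_directed _ (Monotone.directed_le fun a b h =>
    Submodule.span_mono (Set.image_mono (nodesBelow_mono h)))).1 hv

lemma separableSpace_of_dense_span
    (hdense : Dense (Submodule.span ℝ (e '' {t : List ℕ | t ≠ []}) : Set X)) :
    TopologicalSpace.SeparableSpace X :=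
  hdense.isSeparable_iff.1 ((Set.to_countable _).image e).isSeparable.span

theorem nonempty_l1OrthogonalSequence
    (hnorm : ∀ x : (List ℕ) →₀ ℝ, x [] = 0 → ‖∑ t ∈ x.support, x t • e t‖ = jhInfNorm x)
    (hdense : Dense (Submodule.span ℝ (e '' {t : List ℕ | t ≠ []}) : Set X)) :
    Nonempty (L1OrthogonalSequence X) := by
  have := separableSpace_of_dense_span hdense
  obtain ⟨D, hDV, hDc, hDd⟩ := hdense.exists_countable_dense_subset
  obtain ⟨u, rfl⟩ := hDc.exists_eq_range hDd.nonempty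
  choose N hN using fun i => exists_mem_span_nodesBelow (hDV (Set.mem_range_self i))
  set B : ℕ → ℕ := fun m => m + ∑ i ∈ Finset.range (m + 1), N i
  have hNB : ∀ ⦃i m⦄, i ≤ m → N i ≤ B m := fun i m h =>
    (Finset.single_le_sum (fun _ _ => Nat.zero_le _)
      (Finset.mem_range.2 (Nat.lt_succ_of_le h))).trans (Nat.le_add_left _ _)
  have hBB : ∀ ⦃i m⦄, i < m → B i < B m := fun i m h =>
    add_lt_add_of_lt_of_le h
      (Finset.sum_le_sum_of_subset (Finset.range_subset_range.2 (by omega)))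
  exact ⟨{
    u := u
    y := fun m => e (freshNode (B m))
    W := fun m => Submodule.span ℝ (e '' nodesBelow (B m))
    denseRange_u := hDd
    u_mem := fun i m h => Submodule.span_mono (Set.image_mono (nodesBelow_mono (hNB h))) (hN i)
    y_mem := fun i m h =>
      Submodule.subset_span (Set.mem_image_of_mem e (freshNode_mem_nodesBelow (hBB h)))
    norm_add_smul_y := fun m v hv l => norm_add_smul_freshNode hnorm hv l }⟩

end JHSpace

theorem stmt15_general (X : Type*) [NormedAddCommGroup X] [NormedSpace ℝ X]
    (e : List ℕ → X)
    (hnorm : ∀ x : (List ℕ) →₀ ℝ, x [] = 0 → ‖∑ t ∈ x.support, x t • e t‖ = jhInfNorm x)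
    (hdense : Dense (Submodule.span ℝ (e '' {t : List ℕ | t ≠ []}) : Set X)) :
    TopologicalSpace.SeparableSpace X ∧
    (∀ ε : ℝ, 0 < ε → ∀ Y : Submodule ℝ X, FiniteDimensional ℝ Y →
      ∃ x : X, ‖x‖ = 1 ∧ ∀ y ∈ Y, ∀ l : ℝ, (1 - ε) * (|l| + ‖y‖) ≤ ‖l • x + y‖) ∧
    (∃ Y : Submodule ℝ (X →L[ℝ] ℝ),
      (∀ x : X, ‖x‖ = sSup {r : ℝ | ∃ g ∈ Y, ‖g‖ ≤ 1 ∧ r = g x}) ∧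
      ∀ x : X, ∀ g ∈ Y,
        ‖ContinuousLinearMap.id ℝ X + g.smulRight x‖ = 1 + ‖g.smulRight x‖) := by
  obtain ⟨P⟩ := nonempty_l1OrthogonalSequence hnorm hdense
  exact ⟨separableSpace_of_dense_span hdense, P.octahedralNorm, P.almostDaugavet⟩

/-- The hyperplane `M` of `JH_∞` (completion of the finitely supported
functions vanishing at the root) is separable, its norm is octahedral, and it has the
almost Daugavet property: there is a norming subspace `Y ⊆ M*` such that
`‖I + g.smulRight x‖ = 1 + ‖g.smulRight x‖` for every rank-one operator `x ⊗ g` with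
`x ∈ M`, `g ∈ Y`. -/
theorem stmt15 (X : Type*) [NormedAddCommGroup X] [NormedSpace ℝ X] [CompleteSpace X]
    (e : List ℕ → X)
    (hnorm : ∀ x : (List ℕ) →₀ ℝ, x [] = 0 → ‖∑ t ∈ x.support, x t • e t‖ = jhInfNorm x)
    (hdense : Dense (Submodule.span ℝ (e '' {t : List ℕ | t ≠ []}) : Set X)) :
    TopologicalSpace.SeparableSpace X ∧
    (∀ ε : ℝ, 0 < ε → ∀ Y : Submodule ℝ X, FiniteDimensional ℝ Y →
      ∃ x : X, ‖x‖ = 1 ∧ ∀ y ∈ Y, ∀ l : ℝ, (1 - ε) * (|l| + ‖y‖) ≤ ‖l • x + y‖) ∧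
    (∃ Y : Submodule ℝ (X →L[ℝ] ℝ),
      (∀ x : X, ‖x‖ = sSup {r : ℝ | ∃ g ∈ Y, ‖g‖ ≤ 1 ∧ r = g x}) ∧
      ∀ x : X, ∀ g ∈ Y,
        ‖ContinuousLinearMap.id ℝ X + g.smulRight x‖ = 1 + ‖g.smulRight x‖) :=
  stmt15_general X e hnorm hdense
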